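/- (Commutation of the heat semigroup with the derivative.) Let f : ℝ → ℝ be differentiable, with f and its derivative f′ continuous and of polynomial growth. Then for every t > 0 the function x ↦ P_t f(x) is differentiable on ℝ and (d/dx)(P_t f)(x) = P_t f′(x) for every x ∈ ℝ. -/

import Mathlib

open MeasureTheory

/-- The heat kernel `p_t(x) = (1/√(2πt)) e^{−x²/(2t)}`. -/
noncomputable def heatKernel (t x : ℝ) : ℝ :=
  (Real.sqrt (2 * Real.pi * t))⁻¹ * Real.exp (-x ^ 2 / (2 * t))

/-- The heat semigroup `P_t f(x) = ∫_ℝ p_t(x−y) f(y) dy`. -/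
noncomputable def heatSemigroup (t : ℝ) (f : ℝ → ℝ) (x : ℝ) : ℝ :=
  ∫ y, heatKernel t (x - y) * f y

/-- `f` is of polynomial growth: `|f(x)| ≤ C(1 + |x|^k)` for some `C ≥ 0`, `k ∈ ℕ`. -/
def PolyGrowth (f : ℝ → ℝ) : Prop :=
  ∃ C : ℝ, ∃ k : ℕ, 0 ≤ C ∧ ∀ x : ℝ, |f x| ≤ C * (1 + |x| ^ k)

/-!
Writing `P_t f(x) = ∫ f(x - a) dγ_t(a)`, where `γ_t` is the centred Gaussian of variance `t`,
the derivative may be taken under the integral sign: for `y` near `x`, `|f'(y - a)|` is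
dominated by a polynomial in `|a|`, which is `γ_t`-integrable because a Gaussian has moments
of all orders.
-/

open ProbabilityTheory
open scoped NNReal

lemma heatKernel_eq_gaussianPDFReal {t : ℝ} (ht : 0 ≤ t) (x : ℝ) :
    heatKernel t x = gaussianPDFReal 0 t.toNNReal x := by
  rw [heatKernel, gaussianPDFReal, sub_zero, Real.coe_toNNReal _ ht]

lemma heatSemigroup_eq_integral_gaussianReal {t : ℝ} (ht : 0 < t) (f : ℝ → ℝ) (x : ℝ) :
    heatSemigroup t f x = ∫ a, f (x - a) ∂gaussianReal 0 t.toNNReal := by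
  rw [integral_gaussianReal_eq_integral_smul (by simpa using ht), heatSemigroup,
    ← integral_sub_left_eq_self _ volume x]
  simp_rw [sub_sub_cancel, heatKernel_eq_gaussianPDFReal ht.le, smul_eq_mul]

lemma PolyGrowth.abs_comp_sub_le {g : ℝ → ℝ} (hg : PolyGrowth g) :
    ∃ C : ℝ, ∃ k : ℕ, 0 ≤ C ∧ ∀ y a, |g (y - a)| ≤ C * (1 + (|y| + |a|) ^ k) := by
  obtain ⟨C, k, hC, hbound⟩ := hg
  refine ⟨C, k, hC, fun y a => (hbound _).trans ?_⟩
  gcongr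
  exact abs_sub _ _

section FiniteMoments

variable {μ : Measure ℝ} [IsFiniteMeasure μ]

lemma integrable_add_abs_pow (hμ : ∀ p : ℝ≥0, MemLp id p μ) {R : ℝ} (hR : 0 ≤ R) (k : ℕ) :
    Integrable (fun a => (R + |a|) ^ k) μ := by
  have h : MemLp (fun a => R + |a|) k μ := (memLp_const R).add (by simpa using (hμ k).norm)
  simpa [abs_of_nonneg (add_nonneg hR (abs_nonneg _))] using h.integrable_norm_pow'

lemma integrable_const_mul_one_add_add_abs_pow (hμ : ∀ p : ℝ≥0, MemLp id p μ) (C : ℝ)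
    {R : ℝ} (hR : 0 ≤ R) (k : ℕ) : Integrable (fun a => C * (1 + (R + |a|) ^ k)) μ :=
  ((integrable_const 1).add (integrable_add_abs_pow hμ hR k)).const_mul C

lemma PolyGrowth.integrable_comp_sub (hμ : ∀ p : ℝ≥0, MemLp id p μ) {g : ℝ → ℝ}
    (hg : PolyGrowth g) (hgm : Measurable g) (y : ℝ) :
    Integrable (fun a => g (y - a)) μ := by
  obtain ⟨C, k, -, hbound⟩ := hg.abs_comp_sub_le
  exact (integrable_const_mul_one_add_add_abs_pow hμ C (abs_nonneg y) k).mono'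
    (hgm.comp (measurable_const.sub measurable_id)).aestronglyMeasurable
    (ae_of_all _ (hbound y))

theorem hasDerivAt_integral_comp_sub (hμ : ∀ p : ℝ≥0, MemLp id p μ) {f f' : ℝ → ℝ}
    (hderiv : ∀ x, HasDerivAt f (f' x) x) (hf : PolyGrowth f) (hf' : PolyGrowth f') (x : ℝ) :
    HasDerivAt (fun y => ∫ a, f (y - a) ∂μ) (∫ a, f' (x - a) ∂μ) x := by
  have hfm : Measurable f :=
    (Differentiable.continuous fun x => (hderiv x).differentiableAt).measurable
  have hf'm : Measurable f' := funext (fun x => (hderiv x).deriv) ▸ measurable_deriv f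
  obtain ⟨C, k, hC, hbound⟩ := hf'.abs_comp_sub_le
  have h_bound : ∀ y ∈ Metric.ball x 1, ∀ a, ‖f' (y - a)‖ ≤ C * (1 + (|x| + 1 + |a|) ^ k) := by
    intro y hy a
    have : |y| ≤ |x| + 1 := by
      rw [Metric.mem_ball, Real.dist_eq] at hy
      linarith [abs_sub_abs_le_abs_sub y x]
    refine (hbound y a).trans ?_
    gcongr
  exact (hasDerivAt_integral_of_dominated_loc_of_deriv_le (F := fun y a => f (y - a))
    (F' := fun y a => f' (y - a)) (Metric.ball_mem_nhds x one_pos)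
    (.of_forall fun y => (hfm.comp (measurable_const.sub measurable_id)).aestronglyMeasurable)
    (hf.integrable_comp_sub hμ hfm x)
    (hf'm.comp (measurable_const.sub measurable_id)).aestronglyMeasurable
    (ae_of_all _ fun a y hy => h_bound y hy a)
    (integrable_const_mul_one_add_add_abs_pow hμ C (by positivity) k)
    (ae_of_all _ fun a y _ => (hderiv (y - a)).comp_sub_const y a)).2

end FiniteMoments

theorem heatSemigroup_deriv_comm_general
    (f f' : ℝ → ℝ) (hderiv : ∀ x : ℝ, HasDerivAt f (f' x) x)
    (hfpg : PolyGrowth f)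
    (hf'pg : PolyGrowth f') :
    ∀ t : ℝ, 0 < t → ∀ x : ℝ,
      HasDerivAt (fun y => heatSemigroup t f y) (heatSemigroup t f' x) x := by
  intro t ht x
  simp only [heatSemigroup_eq_integral_gaussianReal ht]
  exact hasDerivAt_integral_comp_sub memLp_id_gaussianReal hderiv hfpg hf'pg x

/-- The heat semigroup commutes with the derivative:
`(d/dx)(P_t f)(x) = P_t f′(x)` for `f` differentiable with `f`, `f′`
continuous and of polynomial growth. -/
theorem heatSemigroup_deriv_comm
    (f f' : ℝ → ℝ) (hderiv : ∀ x : ℝ, HasDerivAt f (f' x) x)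
    (hf : Continuous f) (hfpg : PolyGrowth f)
    (hf' : Continuous f') (hf'pg : PolyGrowth f') :
    ∀ t : ℝ, 0 < t → ∀ x : ℝ,
      HasDerivAt (fun y => heatSemigroup t f y) (heatSemigroup t f' x) x :=
  heatSemigroup_deriv_comm_general f f' hderiv hfpg hf'pg
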